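/- arXiv:1811.03839 — 3 statements merged into one kernel-verified Lean document; each statement's English description precedes it below -/
import Mathlib

section
/- Under the stable decomposition assumption with constant C_V > 0 (every v ∈ ℝ^n can be written v = ∑_{j=0}^J R_jᵀ v_j with v_j ∈ ℝ^{n_j} and ∑_{j=0}^J v_jᵀ A_j v_j ≤ C_V vᵀ A v), the additive Schwarz operator satisfies the lower eigenvalue bound ⟨P_ad v, v⟩_A ≥ (1/C_V) ‖v‖_A² for every v ∈ ℝ^n. -/
/-!
With `u = A v` and `w_j = R_j u`, the form `⟨P_ad v, v⟩_A` equals `∑ w_jᵀ A_j⁻¹ w_j`, while a stable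
decomposition `v = ∑ R_jᵀ v_j` gives `‖v‖_A² = ∑ v_jᵀ w_j`. Summing the inequalities
`2 v_jᵀ (c w_j) ≤ v_jᵀ A_j v_j + (c w_j)ᵀ A_j⁻¹ (c w_j)` with `c = C_V` and using the stability bound yields
`2 C_V ‖v‖_A² ≤ C_V ‖v‖_A² + C_V² ⟨P_ad v, v⟩_A`.
-/

open Matrix

namespace Matrix

theorem mulVec_dotProduct_eq_dotProduct_transpose_mulVec {m k : Type*} [Fintype m] [Fintype k]
    (R : Matrix m k ℝ) (p : k → ℝ) (u : m → ℝ) : (R *ᵥ p) ⬝ᵥ u = p ⬝ᵥ Rᵀ *ᵥ u := by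
  rw [dotProduct_comm, dotProduct_transpose_mulVec]

/-- Expand `0 ≤ (x - B⁻¹ y)ᵀ B (x - B⁻¹ y)`. -/
theorem PosDef.two_mul_dotProduct_le {m : Type*} [Fintype m] [DecidableEq m] {B : Matrix m m ℝ}
    (hB : B.PosDef) (x y : m → ℝ) : 2 * (x ⬝ᵥ y) ≤ x ⬝ᵥ B *ᵥ x + y ⬝ᵥ B⁻¹ *ᵥ y := by
  set z := B⁻¹ *ᵥ y
  have hBz : B *ᵥ z = y := by
    rw [mulVec_mulVec, mul_nonsing_inv B hB.det_pos.ne'.isUnit, one_mulVec]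
  have hBt : Bᵀ = B := by
    rw [← conjTranspose_eq_transpose_of_trivial, hB.isHermitian.eq]
  have hzx : z ⬝ᵥ B *ᵥ x = x ⬝ᵥ y := by
    rw [← hBz, ← dotProduct_transpose_mulVec, hBt]
  have hnonneg : 0 ≤ (x - z) ⬝ᵥ B *ᵥ (x - z) := by
    simpa using hB.posSemidef.dotProduct_mulVec_nonneg (x - z)
  rw [mulVec_sub, hBz, dotProduct_sub, sub_dotProduct, sub_dotProduct, hzx,
    dotProduct_comm z y] at hnonneg
  linarith

theorem sum_dotProduct_le_mul_sum_inv_of_sum_le {ι : Type*} [Fintype ι] {κ : ι → Type*}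
    [∀ i, Fintype (κ i)] [∀ i, DecidableEq (κ i)] {B : ∀ i, Matrix (κ i) (κ i) ℝ}
    (hB : ∀ i, (B i).PosDef) (x y : ∀ i, κ i → ℝ) {c : ℝ} (hc : 0 < c)
    (h : ∑ i, x i ⬝ᵥ B i *ᵥ x i ≤ c * ∑ i, x i ⬝ᵥ y i) :
    ∑ i, x i ⬝ᵥ y i ≤ c * ∑ i, y i ⬝ᵥ (B i)⁻¹ *ᵥ y i := by
  have hsum : 2 * c * ∑ i, x i ⬝ᵥ y i
      ≤ ∑ i, x i ⬝ᵥ B i *ᵥ x i + c ^ 2 * ∑ i, y i ⬝ᵥ (B i)⁻¹ *ᵥ y i := by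
    simp only [Finset.mul_sum, ← Finset.sum_add_distrib]
    refine Finset.sum_le_sum fun i _ => ?_
    have := (hB i).two_mul_dotProduct_le (x i) (c • y i)
    simp only [dotProduct_smul, mulVec_smul, smul_dotProduct, smul_eq_mul] at this
    linarith
  nlinarith

theorem sum_mul_mul_transpose_mulVec_dotProduct {m : Type*} [Fintype m] {ι : Type*} [Fintype ι]
    {κ : ι → Type*} [∀ i, Fintype (κ i)] (R : ∀ i, Matrix m (κ i) ℝ)
    (M : ∀ i, Matrix (κ i) (κ i) ℝ) (u : m → ℝ) :
    ((∑ i, R i * M i * (R i)ᵀ) *ᵥ u) ⬝ᵥ u = ∑ i, ((R i)ᵀ *ᵥ u) ⬝ᵥ M i *ᵥ ((R i)ᵀ *ᵥ u) := by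
  rw [sum_mulVec, sum_dotProduct]
  refine Finset.sum_congr rfl fun i _ => ?_
  rw [← mulVec_mulVec, ← mulVec_mulVec, mulVec_dotProduct_eq_dotProduct_transpose_mulVec,
    dotProduct_comm]

end Matrix

theorem additive_schwarz_lower_bound_general (n : ℕ) (J : ℕ)
    (A : Matrix (Fin n) (Fin n) ℝ)
    (nl : Fin (J+1) → ℕ)
    (Rt : ∀ j : Fin (J+1), Matrix (Fin n) (Fin (nl j)) ℝ)
    (Aj : ∀ j : Fin (J+1), Matrix (Fin (nl j)) (Fin (nl j)) ℝ)
    (hAj : ∀ j, (Aj j).PosDef)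
    (CV : ℝ) (hCV : 0 < CV)
    (hstable : ∀ v : Fin n → ℝ, ∃ vj : ∀ j : Fin (J+1), Fin (nl j) → ℝ,
      v = ∑ j, (Rt j).mulVec (vj j) ∧
      ∑ j, vj j ⬝ᵥ (Aj j).mulVec (vj j) ≤ CV * (v ⬝ᵥ A.mulVec v)) :
    ∀ v : Fin n → ℝ,
      (1 / CV) * (v ⬝ᵥ A.mulVec v) ≤
        ((∑ j, Rt j * (Aj j)⁻¹ * (Rt j)ᵀ * A).mulVec v) ⬝ᵥ A.mulVec v := by
  intro v
  obtain ⟨vj, hdecomp, hstable_v⟩ := hstable v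
  have hsplit : v ⬝ᵥ A *ᵥ v = ∑ j, vj j ⬝ᵥ (Rt j)ᵀ *ᵥ (A *ᵥ v) := by
    nth_rewrite 1 [hdecomp]
    simp only [sum_dotProduct, mulVec_dotProduct_eq_dotProduct_transpose_mulVec]
  rw [hsplit] at hstable_v ⊢
  rw [← Finset.sum_mul, ← mulVec_mulVec, sum_mul_mul_transpose_mulVec_dotProduct, one_div,
    inv_mul_le_iff₀ hCV]
  exact sum_dotProduct_le_mul_sum_inv_of_sum_le hAj vj _ hCV hstable_v

theorem additive_schwarz_lower_bound (n : ℕ) (hn : 1 ≤ n) (J : ℕ)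
    (A : Matrix (Fin n) (Fin n) ℝ) (hA : A.PosDef)
    (nl : Fin (J+1) → ℕ) (hnl : ∀ j, 1 ≤ nl j)
    (Rt : ∀ j : Fin (J+1), Matrix (Fin n) (Fin (nl j)) ℝ)
    (Aj : ∀ j : Fin (J+1), Matrix (Fin (nl j)) (Fin (nl j)) ℝ)
    (hAj : ∀ j, (Aj j).PosDef)
    (CV : ℝ) (hCV : 0 < CV)
    (hstable : ∀ v : Fin n → ℝ, ∃ vj : ∀ j : Fin (J+1), Fin (nl j) → ℝ,
      v = ∑ j, (Rt j).mulVec (vj j) ∧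
      ∑ j, vj j ⬝ᵥ (Aj j).mulVec (vj j) ≤ CV * (v ⬝ᵥ A.mulVec v)) :
    ∀ v : Fin n → ℝ,
      (1 / CV) * (v ⬝ᵥ A.mulVec v) ≤
        ((∑ j, Rt j * (Aj j)⁻¹ * (Rt j)ᵀ * A).mulVec v) ⬝ᵥ A.mulVec v :=
  additive_schwarz_lower_bound_general n J A nl Rt Aj hAj CV hCV hstable
end

section
/- Assume the local stability property: there is ω ≥ 1 with ‖R_jᵀ w‖_A² ≤ ω · wᵀ A_j w for all w ∈ ℝ^{n_j} and all j = 0,…,J; and assume the strengthened Cauchy–Schwarz property: there is a symmetric matrix Θ = (θ_{ij})_{i,j=1}^J with nonnegative entries such that ⟨R_iᵀ u, R_jᵀ w⟩_A ≤ θ_{ij} ‖R_iᵀ u‖_A ‖R_jᵀ w‖_A for all u ∈ ℝ^{n_i}, w ∈ ℝ^{n_j} and all i,j = 1,…,J, and let ρ ≥ 0 be such that every eigenvalue of Θ is at most ρ in absolute value. Then the additive Schwarz operator satisfies the upper eigenvalue bound ⟨P_ad v, v⟩_A ≤ ω (ρ + 1) ‖v‖_A² for every v ∈ ℝ^n. 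-/
/-!
Write `t_j := P_j v = R_jᵀ w_j` with `w_j := A_j⁻¹ R_j A v`. Since `A_j w_j = R_j A v`, one has
`⟪t_j, v⟫_A = w_jᵀ A_j w_j`, so local stability reads `‖t_j‖_A² ≤ ω ⟪t_j, v⟫_A`. For the sum
`S` of the fine corrections (`j ≥ 1`), strengthened Cauchy–Schwarz bounds `‖S‖_A²` by `xᵀ Θ x`
with `x_i = ‖t_i‖_A`, and the spectral bound `xᵀ Θ x ≤ ρ |x|²` gives `‖S‖_A² ≤ ρ ω ⟪S, v⟫_A`.
In both cases the ordinary Cauchy–Schwarz inequality turns `‖u‖_A² ≤ K ⟪u, v⟫_A` into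
`⟪u, v⟫_A ≤ K ‖v‖_A²`; adding the coarse (`K = ω`) and fine (`K = ρ ω`) bounds gives the claim.
-/

open Matrix BigOperators

namespace Matrix

variable {ι κ : Type*} [Fintype ι] [Fintype κ]

theorem PosSemidef.dotProduct_mulVec_sq_le {M : Matrix κ κ ℝ} (hM : M.PosSemidef) (x y : κ → ℝ) :
    (x ⬝ᵥ M *ᵥ y) ^ 2 ≤ (x ⬝ᵥ M *ᵥ x) * (y ⬝ᵥ M *ᵥ y) := by
  let _ := M.toSeminormedAddCommGroup hM
  let _ := M.toInnerProductSpace hM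
  have inner_eq (a b : κ → ℝ) : inner ℝ a b = a ⬝ᵥ M *ᵥ b := by
    show (M *ᵥ b) ⬝ᵥ star a = _
    rw [star_trivial, dotProduct_comm]
  simpa only [inner_eq, sq] using real_inner_mul_inner_self_le x y

theorem PosSemidef.dotProduct_mulVec_le_of_self_le {M : Matrix κ κ ℝ} (hM : M.PosSemidef)
    {u v : κ → ℝ} {K : ℝ} (hK : 0 ≤ K) (h : u ⬝ᵥ M *ᵥ u ≤ K * (u ⬝ᵥ M *ᵥ v)) :
    u ⬝ᵥ M *ᵥ v ≤ K * (v ⬝ᵥ M *ᵥ v) := by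
  have hv : 0 ≤ v ⬝ᵥ M *ᵥ v := hM.dotProduct_mulVec_nonneg v
  rcases le_or_gt (u ⬝ᵥ M *ᵥ v) 0 with hc | hc
  · exact hc.trans (mul_nonneg hK hv)
  · have := hM.dotProduct_mulVec_sq_le u v
    nlinarith [mul_le_mul_of_nonneg_right h hv]

theorem IsHermitian.dotProduct_mulVec_le [DecidableEq ι] {Θ : Matrix ι ι ℝ} (hΘ : Θ.IsHermitian)
    {ρ : ℝ} (hρ : ∀ μ, Module.End.HasEigenvalue (toLin' Θ) μ → μ ≤ ρ) (x : ι → ℝ) :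
    x ⬝ᵥ Θ *ᵥ x ≤ ρ * (x ⬝ᵥ x) := by
  open scoped MatrixOrder in
  have hle : Θ ≤ algebraMap ℝ _ ρ := (le_algebraMap_iff_spectrum_le hΘ.isSelfAdjoint).mpr
    fun μ hμ => hρ μ (Module.End.hasEigenvalue_iff_mem_spectrum.mpr (by rwa [spectrum_toLin']))
  simpa [sub_mulVec, Algebra.algebraMap_eq_smul_one, smul_mulVec, dotProduct_sub] using
    (Matrix.le_iff.mp hle).dotProduct_mulVec_nonneg x

theorem PosSemidef.sum_dotProduct_mulVec_sum_le [DecidableEq ι] {M : Matrix κ κ ℝ}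
    (hM : M.PosSemidef) {Θ : Matrix ι ι ℝ} (hΘ : Θ.IsHermitian) {ρ : ℝ}
    (hρ : ∀ μ, Module.End.HasEigenvalue (toLin' Θ) μ → μ ≤ ρ) (t : ι → κ → ℝ)
    (hCS : ∀ i j, t i ⬝ᵥ M *ᵥ t j ≤
      Θ i j * √(t i ⬝ᵥ M *ᵥ t i) * √(t j ⬝ᵥ M *ᵥ t j)) :
    (∑ i, t i) ⬝ᵥ M *ᵥ ∑ i, t i ≤ ρ * ∑ i, t i ⬝ᵥ M *ᵥ t i := by
  set x : ι → ℝ := fun i => √(t i ⬝ᵥ M *ᵥ t i)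
  calc (∑ i, t i) ⬝ᵥ M *ᵥ ∑ i, t i = ∑ i, ∑ j, t i ⬝ᵥ M *ᵥ t j := by
        simp only [mulVec_sum, dotProduct_sum, sum_dotProduct]
        exact Finset.sum_comm
    _ ≤ ∑ i, ∑ j, Θ i j * x i * x j := by gcongr with i _ j _; exact hCS i j
    _ = x ⬝ᵥ Θ *ᵥ x := by
        simp only [dotProduct, mulVec, Finset.mul_sum]
        exact Finset.sum_congr rfl fun i _ => Finset.sum_congr rfl fun j _ => by ring
    _ ≤ ρ * (x ⬝ᵥ x) := hΘ.dotProduct_mulVec_le hρ x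
    _ = ρ * ∑ i, t i ⬝ᵥ M *ᵥ t i :=
        congrArg (ρ * ·) (Finset.sum_congr rfl fun i _ =>
          Real.mul_self_sqrt (hM.dotProduct_mulVec_nonneg (t i)))

theorem mulVec_dotProduct_eq_of_inv [DecidableEq ι] (R : Matrix κ ι ℝ) {B : Matrix ι ι ℝ}
    (hB : IsUnit B.det) (g : κ → ℝ) :
    R *ᵥ (B⁻¹ *ᵥ Rᵀ *ᵥ g) ⬝ᵥ g = (B⁻¹ *ᵥ Rᵀ *ᵥ g) ⬝ᵥ B *ᵥ (B⁻¹ *ᵥ Rᵀ *ᵥ g) := by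
  have hw : B *ᵥ (B⁻¹ *ᵥ Rᵀ *ᵥ g) = Rᵀ *ᵥ g := by
    rw [mulVec_mulVec, mul_nonsing_inv B hB, one_mulVec]
  rw [hw, dotProduct_comm, dotProduct_mulVec, ← mulVec_transpose, dotProduct_comm]

end Matrix

theorem additive_schwarz_upper_bound_general (n : ℕ) (J : ℕ)
    (A : Matrix (Fin n) (Fin n) ℝ) (hA : A.PosDef)
    (nl : Fin (J+1) → ℕ)
    (Rt : ∀ j : Fin (J+1), Matrix (Fin n) (Fin (nl j)) ℝ)
    (Aj : ∀ j : Fin (J+1), Matrix (Fin (nl j)) (Fin (nl j)) ℝ)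
    (hAj : ∀ j, (Aj j).PosDef)
    (ω : ℝ) (hω : 1 ≤ ω)
    (hloc : ∀ (j : Fin (J+1)) (w : Fin (nl j) → ℝ),
      ((Rt j).mulVec w) ⬝ᵥ A.mulVec ((Rt j).mulVec w) ≤ ω * (w ⬝ᵥ (Aj j).mulVec w))
    (Θ : Matrix (Fin J) (Fin J) ℝ) (hΘsym : Θ.IsSymm)
    (hCS : ∀ (i j : Fin J) (u : Fin (nl i.succ) → ℝ) (w : Fin (nl j.succ) → ℝ),
      ((Rt i.succ).mulVec u) ⬝ᵥ A.mulVec ((Rt j.succ).mulVec w) ≤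
        Θ i j * Real.sqrt (((Rt i.succ).mulVec u) ⬝ᵥ A.mulVec ((Rt i.succ).mulVec u)) *
          Real.sqrt (((Rt j.succ).mulVec w) ⬝ᵥ A.mulVec ((Rt j.succ).mulVec w)))
    (ρ : ℝ) (hρ : 0 ≤ ρ)
    (heig : ∀ μ : ℝ, Module.End.HasEigenvalue (Matrix.toLin' Θ) μ → |μ| ≤ ρ) :
    ∀ v : Fin n → ℝ,
      ((∑ j, Rt j * (Aj j)⁻¹ * (Rt j)ᵀ * A).mulVec v) ⬝ᵥ A.mulVec v ≤
        ω * (ρ + 1) * (v ⬝ᵥ A.mulVec v) := by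
  intro v
  -- `w j` is the local solution and `t j = P_j v`.
  set w := fun j => (Aj j)⁻¹ *ᵥ (Rt j)ᵀ *ᵥ A *ᵥ v
  set t := fun j => Rt j *ᵥ w j
  have hP : (∑ j, Rt j * (Aj j)⁻¹ * (Rt j)ᵀ * A) *ᵥ v = ∑ j, t j := by
    simp only [sum_mulVec, ← mulVec_mulVec, t, w]
  have hstab (j) : t j ⬝ᵥ A *ᵥ t j ≤ ω * (t j ⬝ᵥ A *ᵥ v) := by
    rw [mulVec_dotProduct_eq_of_inv _ ((isUnit_iff_isUnit_det _).mp (hAj j).isUnit)]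
    exact hloc j (w j)
  have hω0 : 0 ≤ ω := zero_le_one.trans hω
  have hcoarse := hA.posSemidef.dotProduct_mulVec_le_of_self_le hω0 (hstab 0)
  have hfine_energy : (∑ i : Fin J, t i.succ) ⬝ᵥ A *ᵥ ∑ i : Fin J, t i.succ
      ≤ ρ * ω * ((∑ i : Fin J, t i.succ) ⬝ᵥ A *ᵥ v) := by
    calc _ ≤ ρ * ∑ i : Fin J, t i.succ ⬝ᵥ A *ᵥ t i.succ :=
          hA.posSemidef.sum_dotProduct_mulVec_sum_le (isHermitian_iff_isSymm.mpr hΘsym)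
            (fun μ hμ => (le_abs_self μ).trans (heig μ hμ)) _ fun i j => hCS i j _ _
      _ ≤ ρ * ∑ i : Fin J, ω * (t i.succ ⬝ᵥ A *ᵥ v) := by gcongr with i; exact hstab i.succ
      _ = _ := by simp only [sum_dotProduct, Finset.mul_sum, mul_assoc]
  have hfine := hA.posSemidef.dotProduct_mulVec_le_of_self_le (mul_nonneg hρ hω0) hfine_energy
  rw [hP, Fin.sum_univ_succ, add_dotProduct]
  linarith

theorem additive_schwarz_upper_bound (n : ℕ) (hn : 1 ≤ n) (J : ℕ)
    (A : Matrix (Fin n) (Fin n) ℝ) (hA : A.PosDef)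
    (nl : Fin (J+1) → ℕ) (hnl : ∀ j, 1 ≤ nl j)
    (Rt : ∀ j : Fin (J+1), Matrix (Fin n) (Fin (nl j)) ℝ)
    (Aj : ∀ j : Fin (J+1), Matrix (Fin (nl j)) (Fin (nl j)) ℝ)
    (hAj : ∀ j, (Aj j).PosDef)
    (ω : ℝ) (hω : 1 ≤ ω)
    (hloc : ∀ (j : Fin (J+1)) (w : Fin (nl j) → ℝ),
      ((Rt j).mulVec w) ⬝ᵥ A.mulVec ((Rt j).mulVec w) ≤ ω * (w ⬝ᵥ (Aj j).mulVec w))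
    (Θ : Matrix (Fin J) (Fin J) ℝ) (hΘsym : Θ.IsSymm) (hΘpos : ∀ i j, 0 ≤ Θ i j)
    (hCS : ∀ (i j : Fin J) (u : Fin (nl i.succ) → ℝ) (w : Fin (nl j.succ) → ℝ),
      ((Rt i.succ).mulVec u) ⬝ᵥ A.mulVec ((Rt j.succ).mulVec w) ≤
        Θ i j * Real.sqrt (((Rt i.succ).mulVec u) ⬝ᵥ A.mulVec ((Rt i.succ).mulVec u)) *
          Real.sqrt (((Rt j.succ).mulVec w) ⬝ᵥ A.mulVec ((Rt j.succ).mulVec w)))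
    (ρ : ℝ) (hρ : 0 ≤ ρ)
    (heig : ∀ μ : ℝ, Module.End.HasEigenvalue (Matrix.toLin' Θ) μ → |μ| ≤ ρ) :
    ∀ v : Fin n → ℝ,
      ((∑ j, Rt j * (Aj j)⁻¹ * (Rt j)ᵀ * A).mulVec v) ⬝ᵥ A.mulVec v ≤
        ω * (ρ + 1) * (v ⬝ᵥ A.mulVec v) :=
  additive_schwarz_upper_bound_general n J A hA nl Rt Aj hAj ω hω hloc Θ hΘsym hCS ρ hρ heig
end

section
/- Let a be a symmetric positive semidefinite bilinear form on a real vector space V, let u_1,…,u_J ∈ V, let Θ = (θ_{ij}) ∈ ℝ^{J×J} be a symmetric matrix with nonnegative entries such that a(u_i, u_j) ≤ θ_{ij} · a(u_i,u_i)^{1/2} · a(u_j,u_j)^{1/2} for all i,j, and let ρ ≥ 0 be such that every eigenvalue of Θ is at most ρ in absolute value. Then a(∑_{i=1}^J u_i, ∑_{i=1}^J u_i) ≤ ρ · ∑_{i=1}^J a(u_i, u_i). -/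
/-!
Expanding the bilinear form and applying the hypothesis termwise bounds `a (∑ uᵢ, ∑ uᵢ)` by the
quadratic form `xᵀ Θ x` at `xᵢ = a(uᵢ, uᵢ)^{1/2}`. Since the spectrum of the symmetric matrix `Θ`
lies below `ρ`, the matrix `ρ - Θ` is positive semidefinite, so `xᵀ Θ x ≤ ρ |x|² = ρ ∑ a(uᵢ, uᵢ)`.
-/

open Matrix BigOperators

open scoped MatrixOrder in
theorem Matrix.IsHermitian.dotProduct_mulVec_le_of_spectrum_le {n : Type*} [Fintype n]
    [DecidableEq n] {A : Matrix n n ℝ} (hA : A.IsHermitian) {r : ℝ}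
    (h : ∀ μ ∈ spectrum ℝ A, μ ≤ r) (x : n → ℝ) : x ⬝ᵥ A *ᵥ x ≤ r * (x ⬝ᵥ x) := by
  have hpsd : (algebraMap ℝ _ r - A).PosSemidef := le_algebraMap_of_spectrum_le h hA.isSelfAdjoint
  have := hpsd.dotProduct_mulVec_nonneg x
  rw [Algebra.algebraMap_eq_smul_one, sub_mulVec, smul_mulVec, one_mulVec, dotProduct_sub,
    dotProduct_smul, smul_eq_mul] at this
  exact sub_nonneg.mp this

theorem LinearMap.apply_sum_sum_le_dotProduct_mulVec {ι V : Type*} [Fintype ι] [AddCommGroup V]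
    [Module ℝ V] (a : V →ₗ[ℝ] V →ₗ[ℝ] ℝ) (u : ι → V) (Θ : Matrix ι ι ℝ) (x : ι → ℝ)
    (h : ∀ i j, a (u i) (u j) ≤ Θ i j * x i * x j) :
    a (∑ i, u i) (∑ j, u j) ≤ x ⬝ᵥ Θ *ᵥ x :=
  calc a (∑ i, u i) (∑ j, u j) = ∑ i, ∑ j, a (u i) (u j) := by
        rw [LinearMap.map_sum₂]; simp only [map_sum]
    _ ≤ ∑ i, ∑ j, x i * (Θ i j * x j) :=
        Finset.sum_le_sum fun i _ ↦ Finset.sum_le_sum fun j _ ↦ (h i j).trans_eq (by ring)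
    _ = x ⬝ᵥ Θ *ᵥ x := by simp only [dotProduct, mulVec, Finset.mul_sum]

theorem strengthened_cauchy_schwarz_sum_bound_general (V : Type*) [AddCommGroup V] [Module ℝ V]
    (a : V →ₗ[ℝ] V →ₗ[ℝ] ℝ)
    (hpsd : ∀ v : V, 0 ≤ a v v)
    (J : ℕ) (u : Fin J → V)
    (Θ : Matrix (Fin J) (Fin J) ℝ) (hΘsym : Θ.IsSymm)
    (hCS : ∀ i j : Fin J, a (u i) (u j) ≤
      Θ i j * Real.sqrt (a (u i) (u i)) * Real.sqrt (a (u j) (u j)))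
    (ρ : ℝ)
    (heig : ∀ μ : ℝ, Module.End.HasEigenvalue (Matrix.toLin' Θ) μ → |μ| ≤ ρ) :
    a (∑ i, u i) (∑ i, u i) ≤ ρ * ∑ i, a (u i) (u i) := by
  set x : Fin J → ℝ := fun i ↦ √(a (u i) (u i))
  have hΘ : Θ.IsHermitian := hΘsym
  have hspec : ∀ μ ∈ spectrum ℝ Θ, μ ≤ ρ := fun μ hμ ↦
    (le_abs_self μ).trans <| heig μ <| Module.End.hasEigenvalue_iff_mem_spectrum.mpr <|
      (spectrum_toLin' Θ).symm ▸ hμ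
  have hx : x ⬝ᵥ x = ∑ i, a (u i) (u i) :=
    Finset.sum_congr rfl fun i _ ↦ Real.mul_self_sqrt (hpsd (u i))
  calc a (∑ i, u i) (∑ i, u i) ≤ x ⬝ᵥ Θ *ᵥ x := a.apply_sum_sum_le_dotProduct_mulVec u Θ x hCS
    _ ≤ ρ * (x ⬝ᵥ x) := hΘ.dotProduct_mulVec_le_of_spectrum_le hspec x
    _ = ρ * ∑ i, a (u i) (u i) := by rw [hx]

theorem strengthened_cauchy_schwarz_sum_bound (V : Type*) [AddCommGroup V] [Module ℝ V]
    (a : V →ₗ[ℝ] V →ₗ[ℝ] ℝ)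
    (hsym : ∀ u v : V, a u v = a v u)
    (hpsd : ∀ v : V, 0 ≤ a v v)
    (J : ℕ) (u : Fin J → V)
    (Θ : Matrix (Fin J) (Fin J) ℝ) (hΘsym : Θ.IsSymm) (hΘpos : ∀ i j, 0 ≤ Θ i j)
    (hCS : ∀ i j : Fin J, a (u i) (u j) ≤
      Θ i j * Real.sqrt (a (u i) (u i)) * Real.sqrt (a (u j) (u j)))
    (ρ : ℝ) (hρ : 0 ≤ ρ)
    (heig : ∀ μ : ℝ, Module.End.HasEigenvalue (Matrix.toLin' Θ) μ → |μ| ≤ ρ) :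
    a (∑ i, u i) (∑ i, u i) ≤ ρ * ∑ i, a (u i) (u i) :=
  strengthened_cauchy_schwarz_sum_bound_general V a hpsd J u Θ hΘsym hCS ρ heig
end
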